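/- arXiv:1309.4055 — 2 statements merged into one kernel-verified Lean document; each statement's English description precedes it below -/
import Mathlib

section
/- For any integer k ≥ 2 and any maximal repetition r in a word w, there exist no more than 4k maximal repetitions left associated with r. -/
open scoped Classical

namespace Gapped

variable {α : Type*}

/-- `p` is a period of the factor `w[i..j]` of the word `w` (positions are 1-indexed). -/
def IsPeriod (w : ℕ → α) (i j p : ℕ) : Prop :=
  0 < p ∧ ∀ t, i ≤ t → t + p ≤ j → w t = w (t + p)

/-- The minimal period `p(w[i..j])` of the factor `w[i..j]`. -/
noncomputable def minPer (w : ℕ → α) (i j : ℕ) : ℕ :=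
  sInf {p | IsPeriod w i j p}

/-- The length of the factor `w[i..j]`. -/
def flen (i j : ℕ) : ℕ := j - i + 1

/-- The exponent `e(w[i..j]) = |w[i..j]| / p(w[i..j])` of the factor `w[i..j]`. -/
noncomputable def expo (w : ℕ → α) (i j : ℕ) : ℝ :=
  (flen i j : ℝ) / (minPer w i j : ℝ)

/-- `w[i..j]` is a valid factor of a word of length `n`. -/
def IsFactor (n i j : ℕ) : Prop := 1 ≤ i ∧ i ≤ j ∧ j ≤ n

/-- `w[i..j]` is a repetition: a factor of exponent at least 2. -/
def IsRep (w : ℕ → α) (n i j : ℕ) : Prop :=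
  IsFactor n i j ∧ 2 * minPer w i j ≤ flen i j

/-- `w[i..j]` is a maximal repetition in the word `w` of length `n`. -/
def MaxRep (w : ℕ → α) (n i j : ℕ) : Prop :=
  IsRep w n i j ∧
  (1 < i → w (i - 1) ≠ w (i - 1 + minPer w i j)) ∧
  (j < n → w (j + 1 - minPer w i j) ≠ w (j + 1))

/-- `w[i..j]` is a δ-subrepetition: `1 + δ ≤ e(w[i..j]) < 2`. -/
def IsSubrep (w : ℕ → α) (n : ℕ) (δ : ℝ) (i j : ℕ) : Prop :=
  IsFactor n i j ∧ 1 + δ ≤ expo w i j ∧ expo w i j < 2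

/-- `w[i..j]` is a maximal δ-subrepetition in the word `w` of length `n`. -/
def MaxSubrep (w : ℕ → α) (n : ℕ) (δ : ℝ) (i j : ℕ) : Prop :=
  IsSubrep w n δ i j ∧
  (1 < i → w (i - 1) ≠ w (i - 1 + minPer w i j)) ∧
  (j < n → w (j + 1 - minPer w i j) ≠ w (j + 1))

/-- `w[i..j]` is a maximal subrepetition (a maximal δ-subrepetition for some 0 < δ < 1). -/
def MaxSubrepAny (w : ℕ → α) (n i j : ℕ) : Prop :=
  ∃ δ : ℝ, 0 < δ ∧ δ < 1 ∧ MaxSubrep w n δ i j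

/-- Gapped repeat `(i1, j1, p)`: left copy `w[i1..j1]`, period `p`, right copy
`w[i1+p..j1+p]`; both copies are equal and the gap `w[j1+1..i1+p-1]` is nonempty
(`c(σ) = flen i1 j1 < p`). -/
def IsGapped (w : ℕ → α) (n i1 j1 p : ℕ) : Prop :=
  1 ≤ i1 ∧ i1 ≤ j1 ∧ flen i1 j1 < p ∧ j1 + p ≤ n ∧
  ∀ t, i1 ≤ t → t ≤ j1 → w t = w (t + p)

/-- Maximal gapped repeat: the copies cannot be extended to the left or right
with preserving the period. -/
def MaxGapped (w : ℕ → α) (n i1 j1 p : ℕ) : Prop :=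
  IsGapped w n i1 j1 p ∧
  (1 < i1 → w (i1 - 1) ≠ w (i1 - 1 + p)) ∧
  (j1 + p < n → w (j1 + 1) ≠ w (j1 + 1 + p))

/-- The gapped repeat `(i1, j1, p)` is `a`-gapped: `p(σ) ≤ a · c(σ)`. -/
def AlphaGapped (a : ℝ) (i1 j1 p : ℕ) : Prop :=
  (p : ℝ) ≤ a * (flen i1 j1 : ℝ)

/-- Maximal `a`-gapped repeat. -/
def MaxAlphaGapped (w : ℕ → α) (n : ℕ) (a : ℝ) (i1 j1 p : ℕ) : Prop :=
  MaxGapped w n i1 j1 p ∧ AlphaGapped a i1 j1 p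

/-- `w[I..J]` is the extension of the repetition `w[i..j]`: the maximal repetition
containing it with the same minimal period. -/
def IsExtension (w : ℕ → α) (n i j I J : ℕ) : Prop :=
  MaxRep w n I J ∧ I ≤ i ∧ j ≤ J ∧ minPer w I J = minPer w i j

/-- The gapped repeat `(i1, j1, p)` is periodic: both copies are repetitions. -/
def PeriodicGapped (w : ℕ → α) (n i1 j1 p : ℕ) : Prop :=
  IsRep w n i1 j1 ∧ IsRep w n (i1 + p) (j1 + p)

/-- The maximal gapped repeat `(i1, j1, p)` is a private repeat generated by the
maximal repetition `w[I..J]`: it is periodic and `w[I..J]` is the common extension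
of both copies. -/
def PrivateGenBy (w : ℕ → α) (n i1 j1 p I J : ℕ) : Prop :=
  MaxGapped w n i1 j1 p ∧ PeriodicGapped w n i1 j1 p ∧
  IsExtension w n i1 j1 I J ∧ IsExtension w n (i1 + p) (j1 + p) I J

/-- The maximal gapped repeat `(i1, j1, p)` is private. -/
def IsPrivate (w : ℕ → α) (n i1 j1 p : ℕ) : Prop :=
  ∃ I J, PrivateGenBy w n i1 j1 p I J

/-- `m` is a periodic-prefix length for the copy `w[i..j]`: the prefix of length `m`
is a repetition whose length is at least half of the copy length. -/
def PerPrefix (w : ℕ → α) (n i j m : ℕ) : Prop :=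
  1 ≤ m ∧ m ≤ flen i j ∧ IsRep w n i (i + m - 1) ∧ flen i j ≤ 2 * m

/-- `m` is a periodic-suffix length for the copy `w[i..j]`. -/
def PerSuffix (w : ℕ → α) (n i j m : ℕ) : Prop :=
  1 ≤ m ∧ m ≤ flen i j ∧ IsRep w n (j + 1 - m) j ∧ flen i j ≤ 2 * m

/-- `m` is the length of the periodic prefix (the longest prefix which is a repetition
of length at least half the copy length) of the copy `w[i..j]`. -/
def LongestPerPrefix (w : ℕ → α) (n i j m : ℕ) : Prop :=
  PerPrefix w n i j m ∧ ∀ m', PerPrefix w n i j m' → m' ≤ m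

/-- The gapped repeat `(i1, j1, p)` is prefix semiperiodic. -/
def PrefixSemi (w : ℕ → α) (n i1 j1 p : ℕ) : Prop :=
  ¬ IsRep w n i1 j1 ∧ ¬ IsRep w n (i1 + p) (j1 + p) ∧
  (∃ m, PerPrefix w n i1 j1 m) ∧ (∃ m, PerPrefix w n (i1 + p) (j1 + p) m)

/-- The gapped repeat `(i1, j1, p)` is suffix semiperiodic. -/
def SuffixSemi (w : ℕ → α) (n i1 j1 p : ℕ) : Prop :=
  ¬ IsRep w n i1 j1 ∧ ¬ IsRep w n (i1 + p) (j1 + p) ∧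
  (∃ m, PerSuffix w n i1 j1 m) ∧ (∃ m, PerSuffix w n (i1 + p) (j1 + p) m)

/-- The gapped repeat `(i1, j1, p)` is ordinary: neither periodic nor semiperiodic. -/
def Ordinary (w : ℕ → α) (n i1 j1 p : ℕ) : Prop :=
  ¬ PeriodicGapped w n i1 j1 p ∧ ¬ PrefixSemi w n i1 j1 p ∧ ¬ SuffixSemi w n i1 j1 p

/-- `(i1, j1, p)` belongs to `PSP_k`: it is a prefix semiperiodic maximal `k`-gapped repeat. -/
def InPSP (w : ℕ → α) (n k i1 j1 p : ℕ) : Prop :=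
  MaxGapped w n i1 j1 p ∧ AlphaGapped (k : ℝ) i1 j1 p ∧ PrefixSemi w n i1 j1 p

/-- The repeat `(i1, j1, p) ∈ PSP_k` is generated from the left by `w[I1..J1]` per
`w[I2..J2]`: these are the extensions of the periodic prefixes of the left and right
copies respectively, and `|w[I1..J1]| ≤ |w[I2..J2]|`. -/
def GenFromLeft (w : ℕ → α) (n k i1 j1 p I1 J1 I2 J2 : ℕ) : Prop :=
  InPSP w n k i1 j1 p ∧
  ∃ m, LongestPerPrefix w n i1 j1 m ∧ LongestPerPrefix w n (i1 + p) (j1 + p) m ∧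
    IsExtension w n i1 (i1 + m - 1) I1 J1 ∧
    IsExtension w n (i1 + p) (i1 + p + m - 1) I2 J2 ∧
    flen I1 J1 ≤ flen I2 J2

/-- The maximal repetition `w[I2..J2]` is left associated with the maximal repetition
`w[I1..J1]`: some repeat from `PSP_k` is generated from the left by `w[I1..J1]` per
`w[I2..J2]`. -/
def LeftAssociated (w : ℕ → α) (n k I1 J1 I2 J2 : ℕ) : Prop :=
  ∃ i1 j1 p, GenFromLeft w n k i1 j1 p I1 J1 I2 J2

/-- The periodic maximal `k`-gapped repeat `(i1, j1, p)` is non-private and is generated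
from the left by the maximal repetition `w[I..J]`: `w[I..J]` is the extension of the
left copy, the extension of the right copy is a different maximal repetition which is
not shorter. -/
def GenFromLeftPeriodic (w : ℕ → α) (n k i1 j1 p I J : ℕ) : Prop :=
  MaxGapped w n i1 j1 p ∧ AlphaGapped (k : ℝ) i1 j1 p ∧ PeriodicGapped w n i1 j1 p ∧
  IsExtension w n i1 j1 I J ∧
  ∃ I' J', IsExtension w n (i1 + p) (j1 + p) I' J' ∧ (I', J') ≠ (I, J) ∧
    flen I J ≤ flen I' J'

/-- `(i1, j1, p)` belongs to `OP_k`: it is an ordinary maximal `k`-gapped repeat. -/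
def InOP (w : ℕ → α) (n k i1 j1 p : ℕ) : Prop :=
  MaxGapped w n i1 j1 p ∧ AlphaGapped (k : ℝ) i1 j1 p ∧ Ordinary w n i1 j1 p

/-- The point `(j', p')` covers the point `(j'', p'')`. -/
def Covers (k : ℕ) (j' p' j'' p'' : ℕ) : Prop :=
  (p' : ℝ) - (p' : ℝ) / (4 * k) ≤ (p'' : ℝ) ∧ (p'' : ℝ) ≤ (p' : ℝ) ∧
  (j' : ℝ) - (p' : ℝ) / (3 * k) ≤ (j'' : ℝ) ∧ (j'' : ℝ) ≤ (j' : ℝ)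

/-- The maximal gapped repeat `(i1, j1, p)` is principal: it is the respective repeat
of some maximal subrepetition (which then spans `w[i1..j1+p]` and has minimal period `p`). -/
def Principal (w : ℕ → α) (n i1 j1 p : ℕ) : Prop :=
  ∃ δ : ℝ, 0 < δ ∧ δ < 1 ∧ MaxSubrep w n δ i1 (j1 + p) ∧ minPer w i1 (j1 + p) = p

/-- The gapped repeat `(i1, j1, p)` is stretched by the maximal repetition `w[I..J]`. -/
def StretchedByRep (w : ℕ → α) (n i1 j1 p I J : ℕ) : Prop :=
  MaxRep w n I J ∧ I ≤ i1 ∧ j1 + p ≤ J ∧ minPer w I J < p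

/-- The gapped repeat `(i1, j1, p)` is stretched by the maximal subrepetition `w[I..J]`. -/
def StretchedBySub (w : ℕ → α) (n i1 j1 p I J : ℕ) : Prop :=
  MaxSubrepAny w n I J ∧ I ≤ i1 ∧ j1 + p ≤ J ∧ minPer w I J < p

/-- The gapped repeat `(i1, j1, p)` is stretchable. -/
def Stretchable (w : ℕ → α) (n i1 j1 p : ℕ) : Prop :=
  ∃ I J, StretchedByRep w n i1 j1 p I J ∨ StretchedBySub w n i1 j1 p I J

/-- `u` (with letters at positions `1..m`) is a primitive word of length `m`:
its exponent is not an integer greater than 1. -/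
def Primitive (u : ℕ → α) (m : ℕ) : Prop :=
  ¬ (minPer u 1 m ∣ m ∧ minPer u 1 m < m)

/-- There is an occurrence of the square `uu` (where `|u| = m`) at position `i` in the
word `w` of length `n`. -/
def OccSquare (w : ℕ → α) (n : ℕ) (u : ℕ → α) (m i : ℕ) : Prop :=
  1 ≤ i ∧ i + 2 * m - 1 ≤ n ∧
  ∀ t, 1 ≤ t → t ≤ m → w (i + t - 1) = u t ∧ w (i + m + t - 1) = u t

/-- `E(w)`: the sum of exponents of all maximal repetitions in the word `w` of length `n`. -/
noncomputable def Ew (w : ℕ → α) (n : ℕ) : ℝ :=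
  ∑ r ∈ (Finset.Icc 1 n ×ˢ Finset.Icc 1 n).filter (fun r => MaxRep w n r.1 r.2),
    expo w r.1 r.2

/-- The set of periods of any factor is nonempty. -/
lemma periodSet_nonempty (w : ℕ → α) (i j : ℕ) : {p | IsPeriod w i j p}.Nonempty :=
  ⟨j + 1, by omega, fun t _ h2 => absurd h2 (by omega)⟩

/-- The minimal period is a period. -/
lemma minPer_isPeriod (w : ℕ → α) (i j : ℕ) : IsPeriod w i j (minPer w i j) :=
  Nat.sInf_mem (periodSet_nonempty w i j)

lemma minPer_le (w : ℕ → α) {i j p : ℕ} (h : IsPeriod w i j p) : minPer w i j ≤ p :=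
  Nat.sInf_le h

/-- Shifting a factor by a period of an enclosing repeat preserves the minimal period. -/
lemma minPer_shift (w : ℕ → α) {i1 j1 p : ℕ} (i j : ℕ)
    (hper : ∀ t, i1 ≤ t → t ≤ j1 → w t = w (t + p))
    (hi : i1 ≤ i) (hij : i ≤ j) (hj : j ≤ j1) :
    minPer w i j = minPer w (i + p) (j + p) := by
  unfold minPer
  congr 1
  ext q
  simp only [Set.mem_setOf_eq]
  constructor
  · rintro ⟨hq, hQ⟩
    refine ⟨hq, fun t ht1 ht2 => ?_⟩
    obtain ⟨s, rfl⟩ : ∃ s, t = s + p := ⟨t - p, by omega⟩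
    have e1 : w s = w (s + p) := hper s (by omega) (by omega)
    have e2 : w (s + q) = w (s + q + p) := hper (s + q) (by omega) (by omega)
    have e3 : w s = w (s + q) := hQ s (by omega) (by omega)
    calc w (s + p) = w s := e1.symm
      _ = w (s + q) := e3
      _ = w (s + q + p) := e2
      _ = w (s + p + q) := by rw [show s + q + p = s + p + q from by ring]
  · rintro ⟨hq, hQ⟩
    refine ⟨hq, fun t ht1 ht2 => ?_⟩
    have e1 : w t = w (t + p) := hper t (by omega) (by omega)
    have e2 : w (t + q) = w (t + q + p) := hper (t + q) (by omega) (by omega)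
    have e3 : w (t + p) = w (t + p + q) := hQ (t + p) (by omega) (by omega)
    calc w t = w (t + p) := e1
      _ = w (t + p + q) := e3
      _ = w (t + q + p) := by rw [show t + p + q = t + q + p from by ring]
      _ = w (t + q) := e2.symm

/-- Two maximal repetitions with the same minimal period overlapping by at least
this period coincide. -/
lemma maxRep_eq {w : ℕ → α} {n I J I' J' : ℕ}
    (h : MaxRep w n I J) (h' : MaxRep w n I' J')
    (hpp : minPer w I' J' = minPer w I J)
    (hov1 : I' + minPer w I J ≤ J + 1) (hov2 : I + minPer w I J ≤ J' + 1) :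
    I = I' ∧ J = J' := by
  set p0 := minPer w I J with hp0
  have hP : IsPeriod w I J p0 := minPer_isPeriod w I J
  have hP' : IsPeriod w I' J' p0 := hpp ▸ minPer_isPeriod w I' J'
  have hpos : 0 < p0 := hP.1
  obtain ⟨⟨⟨hI1, hIJ, hJn⟩, _⟩, hL, hRt⟩ := h
  obtain ⟨⟨⟨hI1', hIJ', hJn'⟩, _⟩, hL', hRt'⟩ := h'
  have hJ : J = J' := by
    rcases lt_trichotomy J J' with hlt | he | hlt
    · exfalso
      have hne := hRt (by omega)
      apply hne
      have h0 := hP'.2 (J + 1 - p0) (by omega) (by omega)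
      rwa [show J + 1 - p0 + p0 = J + 1 from by omega] at h0
    · exact he
    · exfalso
      have hne := hRt' (by omega)
      rw [hpp] at hne
      apply hne
      have h0 := hP.2 (J' + 1 - p0) (by omega) (by omega)
      rwa [show J' + 1 - p0 + p0 = J' + 1 from by omega] at h0
  have hI : I = I' := by
    rcases lt_trichotomy I I' with hlt | he | hlt
    · exfalso
      have hne := hL' (by omega)
      rw [hpp] at hne
      exact hne (hP.2 (I' - 1) (by omega) (by omega))
    · exact he
    · exfalso
      have hne := hL (by omega)
      exact hne (hP'.2 (I - 1) (by omega) (by omega))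
  exact ⟨hI, hJ⟩

/-- Structure of a repetition left associated with `w[I1..J1]`. -/
lemma leftAssociated_struct (w : ℕ → α) (n k : ℕ) (I1 J1 I2 J2 : ℕ)
    (h : LeftAssociated w n k I1 J1 I2 J2) :
    MaxRep w n I2 J2 ∧ minPer w I2 J2 = minPer w I1 J1 ∧ flen I1 J1 ≤ flen I2 J2 ∧
      J1 + 2 * minPer w I1 J1 + 2 ≤ J2 ∧ J2 ≤ J1 + 2 * k * flen I1 J1 := by
  obtain ⟨i1, j1, p, ⟨⟨hIG, hMGl, hMGr⟩, hAG, hPS⟩, m,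
    ⟨⟨hm1, hmle, hrepL, hhalfL⟩, hmaxL⟩, ⟨⟨hm1', hmle', hrepR, hhalfR⟩, hmaxR⟩,
    ⟨hMR1, hI1i, hiJ1, hmp1⟩, ⟨hMR2, hI2i, hiJ2, hmp2⟩, hlen⟩ := h
  obtain ⟨h1i, hij, hcp, hjn, hper⟩ := hIG
  set p0 := minPer w I1 J1 with hp0
  have hPI1 : IsPeriod w I1 J1 p0 := minPer_isPeriod w I1 J1
  have hp0pos : 0 < p0 := hPI1.1
  obtain ⟨⟨hfI1, hfIJ1, hfJ1n⟩, _⟩ := hMR1.1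
  obtain ⟨⟨hfI2, hfIJ2, hfJ2n⟩, _⟩ := hMR2.1
  -- 2 * p0 ≤ m
  have hflm : flen i1 (i1 + m - 1) = m := by unfold flen; omega
  have h2p0m : 2 * p0 ≤ m := by
    have := hrepL.2
    rw [hflm, ← hmp1] at this
    exact this
  -- m < flen i1 j1
  have hmlt : m < flen i1 j1 := by
    rcases lt_or_eq_of_le hmle with h' | h'
    · exact h'
    · exfalso
      have he : i1 + m - 1 = j1 := by unfold flen at h'; omega
      exact hPS.1 (he ▸ hrepL)
  have hmj1 : i1 + m ≤ j1 := by unfold flen at hmlt; omega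
  -- J1 = i1 + m - 1
  have hJ1 : i1 + m - 1 = J1 := by
    by_contra hne
    have hlt : i1 + m ≤ J1 := by omega
    have hPm : IsPeriod w i1 (i1 + m) p0 :=
      ⟨hp0pos, fun t ht1 ht2 => hPI1.2 t (by omega) (by omega)⟩
    have hmin : minPer w i1 (i1 + m) ≤ p0 := minPer_le w hPm
    have hpp : PerPrefix w n i1 j1 (m + 1) := by
      refine ⟨by omega, by omega, ?_, ?_⟩
      · rw [show i1 + (m + 1) - 1 = i1 + m from by omega]
        exact ⟨⟨by omega, by omega, by omega⟩, by unfold flen; omega⟩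
      · unfold flen at hhalfL ⊢; omega
    have := hmaxL (m + 1) hpp
    omega
  -- minPer of the right prefix equals p0
  have hshift : minPer w i1 (i1 + m - 1) = minPer w (i1 + p) (i1 + m - 1 + p) :=
    minPer_shift w i1 (i1 + m - 1) hper (le_refl i1) (by omega) (by omega)
  have hmp2' : minPer w I2 J2 = p0 := by
    rw [hmp2, show i1 + p + m - 1 = i1 + m - 1 + p from by omega, ← hshift, ← hmp1]
  -- J2 = i1 + p + m - 1
  have hJ2 : i1 + p + m - 1 = J2 := by
    by_contra hne
    have hlt : i1 + p + m ≤ J2 := by omega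
    have hPI2 : IsPeriod w I2 J2 p0 := hmp2' ▸ minPer_isPeriod w I2 J2
    have hPm : IsPeriod w (i1 + p) (i1 + p + m) p0 :=
      ⟨hp0pos, fun t ht1 ht2 => hPI2.2 t (by omega) (by omega)⟩
    have hmin : minPer w (i1 + p) (i1 + p + m) ≤ p0 := minPer_le w hPm
    have hpp : PerPrefix w n (i1 + p) (j1 + p) (m + 1) := by
      refine ⟨by omega, by unfold flen at hmlt ⊢; omega, ?_, ?_⟩
      · rw [show i1 + p + (m + 1) - 1 = i1 + p + m from by omega]
        exact ⟨⟨by omega, by omega, by omega⟩, by unfold flen; omega⟩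
      · unfold flen at hhalfR ⊢; omega
    have := hmaxR (m + 1) hpp
    omega
  -- period bounds
  have hpk : p ≤ k * flen i1 j1 := by
    have : (p : ℝ) ≤ (k : ℝ) * (flen i1 j1 : ℝ) := hAG
    exact_mod_cast this
  have hmL1 : m ≤ flen I1 J1 := by unfold flen; omega
  have hupper : J2 ≤ J1 + 2 * k * flen I1 J1 := by
    have h52 : k * flen i1 j1 ≤ k * (2 * m) :=
      Nat.mul_le_mul_left _ (by unfold flen at hhalfL ⊢; omega)
    have h53 : k * (2 * m) ≤ k * (2 * flen I1 J1) :=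
      Nat.mul_le_mul_left _ (by omega)
    have h54 : k * (2 * flen I1 J1) = 2 * k * flen I1 J1 := by ring
    have h55 : p ≤ 2 * k * flen I1 J1 := by
      have := le_trans hpk (le_trans h52 h53)
      rwa [h54] at this
    have hJ2e : J2 = J1 + p := by omega
    rw [hJ2e]
    exact Nat.add_le_add_left h55 J1
  have hlower : J1 + 2 * p0 + 2 ≤ J2 := by
    have : flen i1 j1 < p := hcp
    unfold flen at this
    omega
  exact ⟨hMR2, hmp2', hlen, hlower, hupper⟩

/-- Arithmetic helper. -/
lemma count_aux (k L1 p0 : ℕ) (hk : 2 ≤ k) (hp : 1 ≤ p0) (hL : 2 * p0 ≤ L1) :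
    2 * k * L1 - 2 * p0 - 2 < 4 * k * (L1 - p0 + 1) := by
  obtain ⟨c, hcc, hpc⟩ : ∃ c, L1 = c + p0 ∧ p0 ≤ c := ⟨L1 - p0, by omega, by omega⟩
  subst hcc
  rw [show c + p0 - p0 + 1 = c + 1 from by omega]
  have h1 : 2 * k * p0 ≤ 2 * k * c := Nat.mul_le_mul_left _ hpc
  have h2 : 2 * k * (c + p0) = 2 * k * c + 2 * k * p0 := by ring
  have h3 : 4 * k * (c + 1) = 2 * k * c + 2 * k * c + 4 * k := by ring
  have h4 : 0 < 4 * k := by omega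
  calc 2 * k * (c + p0) - 2 * p0 - 2 ≤ 2 * k * (c + p0) :=
        le_trans (Nat.sub_le _ _) (Nat.sub_le _ _)
    _ = 2 * k * c + 2 * k * p0 := h2
    _ ≤ 2 * k * c + 2 * k * c := Nat.add_le_add_left h1 _
    _ < 2 * k * c + 2 * k * c + 4 * k := Nat.lt_add_of_pos_right h4
    _ = 4 * k * (c + 1) := h3.symm

/-- For any `k ≥ 2` and any maximal repetition `w[I1..J1]`, there exist at most `4k`
maximal repetitions left associated with it. -/
theorem count_leftAssociated (w : ℕ → α) (n k : ℕ) (hk : 2 ≤ k) (I1 J1 : ℕ)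
    (hr : MaxRep w n I1 J1) :
    {r : ℕ × ℕ | LeftAssociated w n k I1 J1 r.1 r.2}.ncard ≤ 4 * k := by
  classical
  set p0 := minPer w I1 J1 with hp0
  set L1 := flen I1 J1 with hL1
  have hp0pos : 1 ≤ p0 := (minPer_isPeriod w I1 J1).1
  have hp0L : 2 * p0 ≤ L1 := hr.1.2
  set a := J1 + 2 * p0 + 2 with ha
  set D := L1 - p0 + 1 with hDdef
  have hD : 0 < D := by omega
  obtain ⟨M, hM⟩ : ∃ M, M = 2 * k * L1 := ⟨_, rfl⟩
  obtain ⟨N, hN⟩ : ∃ N, N = 4 * k * D := ⟨_, rfl⟩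
  have hMN : M - 2 * p0 - 2 < N := by
    rw [hM, hN, hDdef]
    exact count_aux k L1 p0 hk hp0pos hp0L
  set S := {r : ℕ × ℕ | LeftAssociated w n k I1 J1 r.1 r.2} with hS
  have key : ∀ r ∈ S, MaxRep w n r.1 r.2 ∧ minPer w r.1 r.2 = p0 ∧
      r.1 + L1 ≤ r.2 + 1 ∧ a ≤ r.2 ∧ r.2 ≤ J1 + M := by
    intro r hrS
    obtain ⟨h1, h2, h3, h4, h5⟩ := leftAssociated_struct w n k I1 J1 r.1 r.2 hrS
    refine ⟨h1, h2, ?_, h4, ?_⟩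
    · obtain ⟨-, hr12, -⟩ := h1.1.1
      rw [hL1]
      unfold flen at h3 ⊢
      omega
    · rw [hM, hL1]
      exact h5
  have hinj : Set.InjOn (fun r : ℕ × ℕ => (r.2 - a) / D) S := by
    intro A hA B hB hEq
    obtain ⟨hA1, hA2, hA3, hA4, hA5⟩ := key A hA
    obtain ⟨hB1, hB2, hB3, hB4, hB5⟩ := key B hB
    simp only at hEq
    have hmain : ∀ X Y : ℕ, a ≤ X → a ≤ Y → X ≤ Y → (X - a) / D = (Y - a) / D →
        Y - X < D := by
      intro X Y h1 h2 h3 h4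
      by_contra hge
      push_neg at hge
      have hdiv : (X - a + D) / D ≤ (Y - a) / D := Nat.div_le_div_right (by omega)
      rw [Nat.add_div_right _ hD, h4] at hdiv
      exact Nat.not_succ_le_self _ hdiv
    rcases le_total A.2 B.2 with hle | hle
    · have hlt : B.2 - A.2 < D := hmain _ _ hA4 hB4 hle hEq
      have he := maxRep_eq hA1 hB1 (hB2.trans hA2.symm) (by omega) (by omega)
      exact Prod.ext_iff.mpr ⟨he.1, he.2⟩
    · have hlt : A.2 - B.2 < D := hmain _ _ hB4 hA4 hle hEq.symm
      have he := maxRep_eq hB1 hA1 (hA2.trans hB2.symm) (by omega) (by omega)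
      exact (Prod.ext_iff.mpr ⟨he.1, he.2⟩).symm
  have himg : (fun r : ℕ × ℕ => (r.2 - a) / D) '' S ⊆ ↑(Finset.range (4 * k)) := by
    rintro x ⟨r, hrS, rfl⟩
    obtain ⟨h1, h2, h3, h4, h5⟩ := key r hrS
    simp only [Finset.coe_range, Set.mem_Iio]
    rw [Nat.div_lt_iff_lt_mul hD, ← hN]
    omega
  calc S.ncard = ((fun r : ℕ × ℕ => (r.2 - a) / D) '' S).ncard :=
        (Set.ncard_image_of_injOn hinj).symm
    _ ≤ (↑(Finset.range (4 * k)) : Set ℕ).ncard :=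
        Set.ncard_le_ncard himg (Finset.range (4 * k)).finite_toSet
    _ = 4 * k := by rw [Set.ncard_coe_finset, Finset.card_range]

end Gapped
end

section
/- For any integer k ≥ 2, two different repeats from OP_k (the set of ordinary maximal k-gapped repeats in a word w) cannot cover the same point. -/
open scoped Classical

namespace Gapped

variable {α : Type*}

section Aux

lemma isRep_of_period {w : ℕ → α} {n i j d : ℕ} (h1 : 1 ≤ i) (hij : i ≤ j) (hjn : j ≤ n)
    (hd : 0 < d) (hdl : 2 * d ≤ flen i j)
    (hper : ∀ t, i ≤ t → t + d ≤ j → w t = w (t + d)) : IsRep w n i j := by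
  refine ⟨⟨h1, hij, hjn⟩, ?_⟩
  have hmem : d ∈ {p | IsPeriod w i j p} := ⟨hd, hper⟩
  have := Nat.sInf_le hmem
  unfold minPer
  omega

lemma isPeriod_shift_iff {w : ℕ → α} {a b p : ℕ} (q : ℕ)
    (hcopy : ∀ t, a ≤ t → t ≤ b → w t = w (t + p)) :
    IsPeriod w a b q ↔ IsPeriod w (a + p) (b + p) q := by
  constructor
  · rintro ⟨hq, h⟩
    refine ⟨hq, fun t ht htq => ?_⟩
    obtain ⟨s, rfl⟩ : ∃ s, t = s + p := ⟨t - p, by omega⟩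
    have h1 : w s = w (s + p) := hcopy s (by omega) (by omega)
    have h2 : w s = w (s + q) := h s (by omega) (by omega)
    have h3 : w (s + q) = w (s + q + p) := hcopy (s + q) (by omega) (by omega)
    calc w (s + p) = w s := h1.symm
      _ = w (s + q) := h2
      _ = w (s + q + p) := h3
      _ = w (s + p + q) := by rw [show s + q + p = s + p + q from by ring]
  · rintro ⟨hq, h⟩
    refine ⟨hq, fun t ht htq => ?_⟩
    have h1 : w t = w (t + p) := hcopy t ht (by omega)
    have h2 : w (t + p) = w (t + p + q) := h (t + p) (by omega) (by omega)
    have h3 : w (t + q) = w (t + q + p) := hcopy (t + q) (by omega) (by omega)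
    calc w t = w (t + p) := h1
      _ = w (t + p + q) := h2
      _ = w (t + q + p) := by rw [show t + p + q = t + q + p from by ring]
      _ = w (t + q) := h3.symm

lemma minPer_shift_s16 {w : ℕ → α} {a b p : ℕ}
    (hcopy : ∀ t, a ≤ t → t ≤ b → w t = w (t + p)) :
    minPer w (a + p) (b + p) = minPer w a b := by
  unfold minPer
  congr 1
  ext q
  simp only [Set.mem_setOf_eq]
  exact (isPeriod_shift_iff q hcopy).symm

lemma isRep_shift_iff {w : ℕ → α} {n a b p : ℕ} (h1 : 1 ≤ a) (hab : a ≤ b) (hbn : b + p ≤ n)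
    (hcopy : ∀ t, a ≤ t → t ≤ b → w t = w (t + p)) :
    IsRep w n a b ↔ IsRep w n (a + p) (b + p) := by
  unfold IsRep IsFactor
  rw [minPer_shift_s16 hcopy, show flen (a + p) (b + p) = flen a b from by unfold flen; omega]
  constructor <;> rintro ⟨-, h2⟩ <;> exact ⟨⟨by omega, by omega, by omega⟩, h2⟩

set_option maxHeartbeats 3200000 in
lemma core_lt (w : ℕ → α) (n k : ℕ) (hk : 2 ≤ k)
    {i1 j1 p i2 j2 r j q : ℕ}
    (hσ : InOP w n k i1 j1 p) (hτ : InOP w n k i2 j2 r)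
    (hcσ : Covers k j1 p j q) (hcτ : Covers k j2 r j q)
    (hrp : r < p) : False := by
  obtain ⟨⟨⟨hi1, hij1, hc1p, hjn1, hperσ⟩, -, -⟩, hα1, hord1⟩ := hσ
  obtain ⟨⟨⟨hi2, hij2, hc2p, hjn2, hperτ⟩, -, -⟩, hα2, hord2⟩ := hτ
  obtain ⟨ha1, ha2, ha3, ha4⟩ := hcσ
  obtain ⟨hb1, hb2, hb3, hb4⟩ := hcτ
  set d := p - r with hdd
  have hd1 : 1 ≤ d := by omega
  have hk0 : (0:ℝ) < (k:ℝ) := by exact_mod_cast (show 0 < k by omega)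
  have hk2 : (2:ℝ) ≤ (k:ℝ) := by exact_mod_cast hk
  have h4k : (0:ℝ) < 4 * (k:ℝ) := by linarith
  have h3k : (0:ℝ) < 3 * (k:ℝ) := by linarith
  have H1 : (p:ℝ) ≤ (k:ℝ) * (flen i1 j1 : ℝ) := hα1
  have H3 : (r:ℝ) ≤ (k:ℝ) * (flen i2 j2 : ℝ) := hα2
  have erd : (r:ℝ) + (d:ℝ) = (p:ℝ) := by exact_mod_cast (show r + d = p by omega)
  have hdnn : (0:ℝ) ≤ (d:ℝ) := by positivity
  have e1 : (i1:ℝ) + (flen i1 j1 : ℝ) = (j1:ℝ) + 1 := by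
    exact_mod_cast (show i1 + flen i1 j1 = j1 + 1 by unfold flen; omega)
  have e2 : (i2:ℝ) + (flen i2 j2 : ℝ) = (j2:ℝ) + 1 := by
    exact_mod_cast (show i2 + flen i2 j2 = j2 + 1 by unfold flen; omega)
  have F1' : ((p:ℝ) - q) * (4 * k) ≤ p := (le_div_iff₀ h4k).mp (by linarith)
  have F1d : (d:ℝ) * (4 * k) ≤ p :=
    le_trans (mul_le_mul_of_nonneg_right (by linarith : (d:ℝ) ≤ (p:ℝ) - q) h4k.le) F1'
  have F3' : ((j1:ℝ) - j) * (3 * k) ≤ p := (le_div_iff₀ h3k).mp (by linarith)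
  have N2 : ((j1:ℝ) - j2) * (3 * k) ≤ p :=
    le_trans (mul_le_mul_of_nonneg_right (by linarith : (j1:ℝ) - j2 ≤ (j1:ℝ) - j) h3k.le) F3'
  have G3' : ((j2:ℝ) - j) * (3 * k) ≤ r := (le_div_iff₀ h3k).mp (by linarith)
  have N3 : ((j2:ℝ) - j1) * (3 * k) ≤ r :=
    le_trans (mul_le_mul_of_nonneg_right (by linarith : (j2:ℝ) - j1 ≤ (j2:ℝ) - j) h3k.le) G3'
  have hr78 : 8 * ((p:ℝ) - r) ≤ p := by nlinarith [F1d, erd, hdnn, hk2]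
  have hrpos : (1:ℝ) ≤ (r:ℝ) := by exact_mod_cast (show 1 ≤ r by unfold flen at hc2p; omega)
  -- the combined period d on the overlap
  have hper : ∀ t, i1 ≤ t → t ≤ j1 → i2 ≤ t + d → t + d ≤ j2 → w t = w (t + d) := by
    intro t h1 h2 h3 h4
    calc w t = w (t + p) := hperσ t h1 h2
      _ = w (t + d + r) := by rw [show t + d + r = t + p from by omega]
      _ = w (t + d) := (hperτ (t + d) h3 h4).symm
  by_cases hA : i2 ≤ i1 + d
  · by_cases hAj : j1 ≤ j2
    · -- whole left copy of σ has period d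
      have key : 2 * (d:ℝ) ≤ (flen i1 j1 : ℝ) := by
        have h5 : (k:ℝ) * (4 * (d:ℝ)) ≤ (k:ℝ) * (flen i1 j1 : ℝ) := by nlinarith [F1d, H1]
        have h6 : 4 * (d:ℝ) ≤ (flen i1 j1 : ℝ) := le_of_mul_le_mul_left h5 hk0
        linarith
      have keyN : 2 * d ≤ flen i1 j1 := by exact_mod_cast key
      have hrepL : IsRep w n i1 j1 :=
        isRep_of_period hi1 hij1 (by omega) (by omega) keyN
          (fun t ht htd => hper t ht (by omega) (by omega) (by omega))
      exact hord1.1 ⟨hrepL, (isRep_shift_iff hi1 hij1 hjn1 hperσ).mp hrepL⟩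
    · push_neg at hAj
      -- prefix w[i1..j2] of σ's left copy has period d
      have s1' : (k:ℝ) * (3 * ((j1:ℝ) - j2)) ≤ (k:ℝ) * (flen i1 j1 : ℝ) := by
        nlinarith [N2, H1]
      have s1 : 3 * ((j1:ℝ) - j2) ≤ (flen i1 j1 : ℝ) := le_of_mul_le_mul_left s1' hk0
      have hone : (1:ℝ) ≤ (flen i1 j1 : ℝ) := by
        exact_mod_cast (show 1 ≤ flen i1 j1 by unfold flen; omega)
      have him : i1 ≤ j2 := by
        by_contra hcon
        push_neg at hcon
        have : (j2:ℝ) + 1 ≤ (i1:ℝ) := by exact_mod_cast (show j2 + 1 ≤ i1 by omega)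
        linarith [e1, s1, hone]
      set m := j2 - i1 + 1 with hmm
      have hmf : flen i1 j2 = m := rfl
      have em : (i1:ℝ) + (m:ℝ) = (j2:ℝ) + 1 := by
        exact_mod_cast (show i1 + m = j2 + 1 by omega)
      have emm : (m:ℝ) = (flen i1 j1 : ℝ) - ((j1:ℝ) - j2) := by linarith [e1, em]
      have gm1 : 2 * d ≤ m := by
        have P1 : (k:ℝ) * m = (k:ℝ) * (flen i1 j1 : ℝ) - (k:ℝ) * ((j1:ℝ) - j2) := by
          rw [emm]; ring
        have h5 : (k:ℝ) * (2 * (d:ℝ)) ≤ (k:ℝ) * (m:ℝ) := by nlinarith [F1d, N2, H1, P1]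
        have : 2 * (d:ℝ) ≤ (m:ℝ) := le_of_mul_le_mul_left h5 hk0
        exact_mod_cast this
      have gm2 : flen i1 j1 ≤ 2 * m := by
        have hj12 : (j2:ℝ) ≤ (j1:ℝ) := by exact_mod_cast hAj.le
        have : (flen i1 j1 : ℝ) ≤ 2 * (m:ℝ) := by linarith [s1, emm]
        exact_mod_cast this
      have hrepP : IsRep w n i1 j2 :=
        isRep_of_period hi1 him (by omega) (by omega) (by rw [hmf]; exact gm1)
          (fun t ht htd => hper t ht (by omega) (by omega) (by omega))
      have hcopy2 : ∀ t, i1 ≤ t → t ≤ j2 → w t = w (t + p) :=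
        fun t ht htle => hperσ t ht (by omega)
      have hrepPR : IsRep w n (i1 + p) (j2 + p) :=
        (isRep_shift_iff hi1 him (by omega) hcopy2).mp hrepP
      by_cases hL : IsRep w n i1 j1
      · exact hord1.1 ⟨hL, (isRep_shift_iff hi1 hij1 hjn1 hperσ).mp hL⟩
      · have hR : ¬ IsRep w n (i1 + p) (j1 + p) := fun hR =>
          hord1.1 ⟨(isRep_shift_iff hi1 hij1 hjn1 hperσ).mpr hR, hR⟩
        refine hord1.2.1 ⟨hL, hR, ⟨m, by omega, by unfold flen; omega, ?_, gm2⟩,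
          ⟨m, by omega, by unfold flen; omega, ?_, by unfold flen at gm2 ⊢; omega⟩⟩
        · rw [show i1 + m - 1 = j2 from by omega]; exact hrepP
        · rw [show i1 + p + m - 1 = j2 + p from by omega]; exact hrepPR
  · push_neg at hA
    by_cases hBj : j2 ≤ j1 + d
    · -- whole left copy of τ has period d
      have key : 2 * (d:ℝ) ≤ (flen i2 j2 : ℝ) := by
        have h5 : (k:ℝ) * (2 * (d:ℝ)) ≤ (k:ℝ) * (flen i2 j2 : ℝ) := by
          nlinarith [F1d, H3, hr78, erd]
        exact le_of_mul_le_mul_left h5 hk0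
      have keyN : 2 * d ≤ flen i2 j2 := by exact_mod_cast key
      have hrepL : IsRep w n i2 j2 :=
        isRep_of_period hi2 hij2 (by omega) (by omega) keyN
          (fun t ht htd => hper t (by omega) (by omega) (by omega) (by omega))
      exact hord2.1 ⟨hrepL, (isRep_shift_iff hi2 hij2 hjn2 hperτ).mp hrepL⟩
    · push_neg at hBj
      -- prefix w[i2..j1+d] of τ's left copy has period d
      have P2 : (k:ℝ) * i2 = (k:ℝ) * j2 + (k:ℝ) - (k:ℝ) * (flen i2 j2 : ℝ) := by
        have : (i2:ℝ) = (j2:ℝ) + 1 - (flen i2 j2 : ℝ) := by linarith [e2]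
        rw [this]; ring
      have hi2j1 : i2 ≤ j1 := by
        have : (k:ℝ) * i2 < (k:ℝ) * ((j1:ℝ) + 1) := by nlinarith [P2, H3, N3, hrpos]
        have h2 : (i2:ℝ) < (j1:ℝ) + 1 := lt_of_mul_lt_mul_left this hk0.le
        have h3 : (i2:ℝ) < ((j1 + 1 : ℕ):ℝ) := by push_cast; linarith
        have := (Nat.cast_lt (α := ℝ)).mp h3
        omega
      set m := j1 + d + 1 - i2 with hmm
      have hmf : flen i2 (j1 + d) = m := by unfold flen; omega
      have em2 : (i2:ℝ) + (m:ℝ) = (j1:ℝ) + (d:ℝ) + 1 := by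
        exact_mod_cast (show i2 + m = j1 + d + 1 by omega)
      have Q1 : (k:ℝ) * m = (k:ℝ) * d + (k:ℝ) * j1 + (k:ℝ) - (k:ℝ) * i2 := by
        have : (m:ℝ) = (d:ℝ) + (j1:ℝ) + 1 - (i2:ℝ) := by linarith [em2]
        rw [this]; ring
      have gm1 : 2 * d ≤ m := by
        have h5 : (k:ℝ) * (2 * (d:ℝ)) ≤ (k:ℝ) * (m:ℝ) := by
          nlinarith [Q1, P2, H3, N3, F1d, hr78, erd, hdnn, hk2]
        have : 2 * (d:ℝ) ≤ (m:ℝ) := le_of_mul_le_mul_left h5 hk0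
        exact_mod_cast this
      have gm2R : (flen i2 j2 : ℝ) ≤ 2 * (m:ℝ) := by
        have Q2 : (k:ℝ) * m = (k:ℝ) * (flen i2 j2 : ℝ) - (k:ℝ) * ((j2:ℝ) - j1) + (k:ℝ) * d := by
          have : (m:ℝ) = (flen i2 j2 : ℝ) - ((j2:ℝ) - j1) + (d:ℝ) := by linarith [e2, em2]
          rw [this]; ring
        have h5 : (k:ℝ) * (flen i2 j2 : ℝ) ≤ (k:ℝ) * (2 * (m:ℝ)) := by
          nlinarith [Q2, H3, N3, mul_nonneg hk0.le hdnn]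
        exact le_of_mul_le_mul_left h5 hk0
      have gm2 : flen i2 j2 ≤ 2 * m := by exact_mod_cast gm2R
      have hrepP : IsRep w n i2 (j1 + d) :=
        isRep_of_period hi2 (by omega) (by omega) (by omega) (by rw [hmf]; exact gm1)
          (fun t ht htd => hper t (by omega) (by omega) (by omega) (by omega))
      have hcopy2 : ∀ t, i2 ≤ t → t ≤ j1 + d → w t = w (t + r) :=
        fun t ht htle => hperτ t ht (by omega)
      have hrepPR : IsRep w n (i2 + r) (j1 + d + r) :=
        (isRep_shift_iff hi2 (by omega) (by omega) hcopy2).mp hrepP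
      by_cases hL : IsRep w n i2 j2
      · exact hord2.1 ⟨hL, (isRep_shift_iff hi2 hij2 hjn2 hperτ).mp hL⟩
      · have hR : ¬ IsRep w n (i2 + r) (j2 + r) := fun hR =>
          hord2.1 ⟨(isRep_shift_iff hi2 hij2 hjn2 hperτ).mpr hR, hR⟩
        refine hord2.2.1 ⟨hL, hR, ⟨m, by omega, by unfold flen; omega, ?_, gm2⟩,
          ⟨m, by omega, by unfold flen; omega, ?_, by unfold flen at gm2 ⊢; omega⟩⟩
        · rw [show i2 + m - 1 = j1 + d from by omega]; exact hrepP
        · rw [show i2 + r + m - 1 = j1 + d + r from by omega]; exact hrepPR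

lemma eq_period_aux {w : ℕ → α} {n k i1 j1 p i2 j2 j q : ℕ} (hk : 2 ≤ k)
    (hσ : InOP w n k i1 j1 p) (hτ : MaxGapped w n i2 j2 p)
    (hcσ : Covers k j1 p j q) (hjle : j ≤ j2) (hlt : j2 < j1) : False := by
  obtain ⟨⟨⟨hi1, hij1, hc1p, hjn1, hperσ⟩, -, -⟩, hα1, -⟩ := hσ
  obtain ⟨⟨hi2, hij2, hc2p, hjn2, hperτ⟩, -, hmaxR⟩ := hτ
  obtain ⟨ha1, ha2, ha3, ha4⟩ := hcσ
  have hk0 : (0:ℝ) < (k:ℝ) := by exact_mod_cast (show 0 < k by omega)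
  have h3k : (0:ℝ) < 3 * (k:ℝ) := by linarith
  have F3' : ((j1:ℝ) - j) * (3 * k) ≤ p := (le_div_iff₀ h3k).mp (by linarith)
  have hjle' : (j:ℝ) ≤ (j2:ℝ) := by exact_mod_cast hjle
  have N2 : ((j1:ℝ) - j2) * (3 * k) ≤ p :=
    le_trans (mul_le_mul_of_nonneg_right (by linarith) h3k.le) F3'
  have H1 : (p:ℝ) ≤ (k:ℝ) * (flen i1 j1 : ℝ) := hα1
  have s1' : (k:ℝ) * (3 * ((j1:ℝ) - j2)) ≤ (k:ℝ) * (flen i1 j1 : ℝ) := by nlinarith [N2, H1]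
  have s1 : 3 * ((j1:ℝ) - j2) ≤ (flen i1 j1 : ℝ) := le_of_mul_le_mul_left s1' hk0
  have s1N : 3 * j1 ≤ 3 * j2 + flen i1 j1 := by
    have : 3 * (j1:ℝ) ≤ 3 * (j2:ℝ) + (flen i1 j1 : ℝ) := by linarith
    exact_mod_cast this
  have hflen : flen i1 j1 = j1 - i1 + 1 := rfl
  have him : i1 ≤ j2 := by omega
  exact hmaxR (by omega) (hperσ (j2 + 1) (by omega) (by omega))

end Aux

/-- Two different repeats from `OP_k` cannot cover the same point. -/
theorem no_common_covered_point (w : ℕ → α) (n k : ℕ) (hk : 2 ≤ k)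
    (σ τ : ℕ × ℕ × ℕ)
    (hσ : InOP w n k σ.1 σ.2.1 σ.2.2) (hτ : InOP w n k τ.1 τ.2.1 τ.2.2)
    (hne : σ ≠ τ) (j q : ℕ) (hj : 1 ≤ j) (hq : 1 ≤ q)
    (hcσ : Covers k σ.2.1 σ.2.2 j q) (hcτ : Covers k τ.2.1 τ.2.2 j q) :
    False := by
  obtain ⟨i1, j1, p⟩ := σ
  obtain ⟨i2, j2, r⟩ := τ
  simp only at hσ hτ hcσ hcτ hne
  rcases lt_trichotomy r p with h | h | h
  · exact core_lt w n k hk hσ hτ hcσ hcτ h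
  · subst h
    rcases lt_trichotomy j1 j2 with hj12 | hj12 | hj12
    · have hjle : j ≤ j1 := by exact_mod_cast hcσ.2.2.2
      exact eq_period_aux hk hτ hσ.1 hcτ hjle hj12
    · subst hj12
      rcases lt_trichotomy i1 i2 with hi | hi | hi
      · exact hτ.1.2.1 (by have := hσ.1.1.1; omega)
          (hσ.1.1.2.2.2.2 (i2 - 1) (by omega) (by have := hτ.1.1.2.1; omega))
      · subst hi; exact hne rfl
      · exact hσ.1.2.1 (by have := hτ.1.1.1; omega)
          (hτ.1.1.2.2.2.2 (i1 - 1) (by omega) (by have := hσ.1.1.2.1; omega))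
    · have hjle : j ≤ j2 := by exact_mod_cast hcτ.2.2.2
      exact eq_period_aux hk hσ hτ.1 hcσ hjle hj12
  · exact core_lt w n k hk hτ hσ hcτ hcσ h


end Gapped
end
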